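/- arXiv:1209.4580 — 5 statements merged into one kernel-verified Lean document; each statement's English description precedes it below -/
import Mathlib

section
/- There exist f, g ∈ ℓ²(ℕ) whose convolution f * g has infinite ℓ² norm; consequently, the non-commutative white noise space L²(ℓ̃, counting measure) is not closed under the Wick (convolution) product. -/
/-- The Wick product (monoid convolution) on the free monoid on ℕ:
`(f ⊗ g)_γ = ∑_{αβ = γ} f_α g_β`. -/
noncomputable def wick (f g : FreeMonoid ℕ → ℂ) (γ : FreeMonoid ℕ) : ℂ :=
  ∑ j ∈ Finset.range ((FreeMonoid.toList γ).length + 1),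
    f (FreeMonoid.ofList ((FreeMonoid.toList γ).take j)) *
      g (FreeMonoid.ofList ((FreeMonoid.toList γ).drop j))

/-!
For `a n = (n + 1) ^ (-3/4)` we have `a ∈ ℓ²`, while each of the `n + 1` terms of `(a * a) n` is at
least `a n ^ 2` because `a` is antitone. Hence `(a * a) n ≥ (n + 1) ^ (-1/2)`, whose square is the
harmonic series. The powers of a single letter embed `(ℕ, +)` into the free monoid, and every
factorization of such a power is a pair of powers of that letter; so extending by zero carries
`ℓ²(ℕ)` isometrically into `L²(ℓ̃)` and the convolution onto the Wick product.
-/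

open Finset Function

lemma card_mul_le_sum_mul_of_antitone {f g : ℕ → ℝ} (hf : Antitone f) (hg : Antitone g)
    {n : ℕ} (hfn : 0 ≤ f n) (hgn : 0 ≤ g n) :
    (n + 1) * (f n * g n) ≤ ∑ k ∈ range (n + 1), f k * g (n - k) := by
  calc (n + 1) * (f n * g n) = ∑ _k ∈ range (n + 1), f n * g n := by simp
    _ ≤ ∑ k ∈ range (n + 1), f k * g (n - k) := by
      refine sum_le_sum fun k hk => ?_
      have hkn : k ≤ n := Nat.lt_succ_iff.mp (mem_range.mp hk)
      exact mul_le_mul (hf hkn) (hg (Nat.sub_le n k)) hgn (hfn.trans (hf hkn))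

/-- Any exponent `p ∈ (1/2, 3/4]` would do: then `a ∈ ℓ²`, but
`(n + 1) a_n² = (n + 1)^(1 - 2p) ∉ ℓ²`. -/
noncomputable def decaySeq (n : ℕ) : ℝ := ((n : ℝ) + 1) ^ (-(3 / 4 : ℝ))

lemma decaySeq_nonneg (n : ℕ) : 0 ≤ decaySeq n := by unfold decaySeq; positivity

lemma decaySeq_antitone : Antitone decaySeq := fun m n hmn =>
  Real.rpow_le_rpow_of_nonpos (by positivity) (by gcongr) (by norm_num)

lemma natCast_add_one_rpow_neg (n : ℕ) (s : ℝ) :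
    ((n : ℝ) + 1) ^ (-s) = 1 / |(n : ℝ) + 1| ^ s := by
  rw [Real.rpow_neg (by positivity), abs_of_pos (by positivity), one_div]

lemma decaySeq_sq (n : ℕ) : decaySeq n ^ 2 = ((n : ℝ) + 1) ^ (-(3 / 2 : ℝ)) := by
  rw [decaySeq, ← Real.rpow_mul_natCast (by positivity)]
  norm_num

lemma summable_decaySeq_sq : Summable (fun n => decaySeq n ^ 2) := by
  simp_rw [decaySeq_sq, natCast_add_one_rpow_neg]
  exact (Real.summable_one_div_nat_add_rpow 1 _).mpr (by norm_num)

lemma sq_card_mul_decaySeq_sq (n : ℕ) :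
    ((n + 1) * (decaySeq n * decaySeq n)) ^ 2 = ((n : ℝ) + 1) ^ (-(1 : ℝ)) := by
  have hpos : (0 : ℝ) < n + 1 := by positivity
  rw [← sq, decaySeq_sq, ← Real.rpow_one_add' hpos.le (by norm_num),
    ← Real.rpow_mul_natCast hpos.le]
  norm_num

lemma not_summable_sq_conv_decaySeq :
    ¬ Summable (fun n => (∑ k ∈ range (n + 1), decaySeq k * decaySeq (n - k)) ^ 2) := by
  intro h
  refine (Real.summable_one_div_nat_add_rpow 1 1).not.mpr (lt_irrefl 1) ?_
  refine h.of_nonneg_of_le (fun n => by positivity) fun n => ?_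
  rw [← natCast_add_one_rpow_neg, ← sq_card_mul_decaySeq_sq]
  gcongr
  · have := decaySeq_nonneg n
    positivity
  · exact card_mul_le_sum_mul_of_antitone decaySeq_antitone decaySeq_antitone
      (decaySeq_nonneg n) (decaySeq_nonneg n)

lemma norm_sq_ofReal (x : ℝ) : ‖(x : ℂ)‖ ^ 2 = x ^ 2 := by
  rw [Complex.norm_real, Real.norm_eq_abs, sq_abs]

theorem exists_sq_summable_conv_not_sq_summable :
    ∃ f g : ℕ → ℂ, Summable (fun n => ‖f n‖ ^ 2) ∧ Summable (fun n => ‖g n‖ ^ 2) ∧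
      ¬ Summable (fun n : ℕ => ‖∑ k ∈ Finset.range (n + 1), f k * g (n - k)‖ ^ 2) := by
  have hf : Summable (fun n => ‖(decaySeq n : ℂ)‖ ^ 2) := by
    simpa only [norm_sq_ofReal] using summable_decaySeq_sq
  refine ⟨fun n => decaySeq n, fun n => decaySeq n, hf, hf, ?_⟩
  simpa only [← Complex.ofReal_mul, ← Complex.ofReal_sum, norm_sq_ofReal]
    using not_summable_sq_conv_decaySeq

def replicateWord (a n : ℕ) : FreeMonoid ℕ := FreeMonoid.ofList (List.replicate n a)

lemma replicateWord_injective (a : ℕ) : Injective (replicateWord a) := fun m n h => by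
  simpa [replicateWord] using congrArg (fun w => (FreeMonoid.toList w).length) h

lemma wick_extend_replicateWord (a : ℕ) (f g : ℕ → ℂ) (n : ℕ) :
    wick (extend (replicateWord a) f 0) (extend (replicateWord a) g 0) (replicateWord a n) =
      ∑ k ∈ range (n + 1), f k * g (n - k) := by
  have he := replicateWord_injective a
  simp only [wick, replicateWord, FreeMonoid.toList_ofList, List.length_replicate]
  refine sum_congr rfl fun k hk => ?_
  rw [List.take_replicate, List.drop_replicate,
    min_eq_left (Nat.lt_succ_iff.mp (mem_range.mp hk))]
  exact congrArg₂ (· * ·) (he.extend_apply f 0 k) (he.extend_apply g 0 (n - k))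

lemma summable_norm_sq_extend_iff {ι κ E : Type*} [NormedAddCommGroup E] {e : ι → κ}
    (he : Injective e) (f : ι → E) :
    Summable (fun x => ‖extend e f 0 x‖ ^ 2) ↔ Summable (fun i => ‖f i‖ ^ 2) := by
  have hzero : ∀ x ∉ Set.range e, ‖extend e f 0 x‖ ^ 2 = 0 := fun x hx => by
    simp [extend_apply' f (0 : κ → E) x (by simpa using hx)]
  rw [← he.summable_iff hzero]
  simp only [comp_def, he.extend_apply]

/-- There exist `f, g ∈ ℓ²(ℕ)` whose convolution has infinite `ℓ²` norm; consequently
the non-commutative white noise space `L²(ℓ̃, counting measure)` is not closed under the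
Wick (convolution) product. -/
theorem whiteNoise_not_closed_under_wick :
    (∃ f g : ℕ → ℂ, Summable (fun n => ‖f n‖ ^ 2) ∧ Summable (fun n => ‖g n‖ ^ 2) ∧
      ¬ Summable (fun n : ℕ => ‖∑ k ∈ Finset.range (n + 1), f k * g (n - k)‖ ^ 2)) ∧
    ∃ F G : FreeMonoid ℕ → ℂ,
      Summable (fun α => ‖F α‖ ^ 2) ∧ Summable (fun α => ‖G α‖ ^ 2) ∧
        ¬ Summable (fun γ => ‖wick F G γ‖ ^ 2) := by
  obtain ⟨f, g, hf, hg, hfg⟩ := exists_sq_summable_conv_not_sq_summable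
  have he := replicateWord_injective 0
  refine ⟨⟨f, g, hf, hg, hfg⟩, extend (replicateWord 0) f 0, extend (replicateWord 0) g 0,
    (summable_norm_sq_extend_iff he f).mpr hf, (summable_norm_sq_extend_iff he g).mpr hg,
    fun hwick => hfg ?_⟩
  simpa only [comp_def, wick_extend_replicateWord] using hwick.comp_injective he
end

section
/- Let b: ℓ̃ → [1,∞) be a monoid homomorphism from the free monoid ℓ̃ on ℕ to the multiplicative reals, and for p ∈ ℕ define ‖f‖_p² = ∑_{α∈ℓ̃} |f_α|² b_α^{-p}. Suppose C² := ∑_{α∈ℓ̃} b_α^{-(q-p)} < ∞. Then for all f with ‖f‖_p < ∞ and g with ‖g‖_q < ∞, the monoid convolution f ⊗ g satisfies ‖f ⊗ g‖_q ≤ C ‖f‖_p ‖g‖_q. -/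
/-! For each `γ`, Cauchy–Schwarz over the factorizations `γ = αβ` with weights `b_α^{-(q-p)}`
gives `|(f ⊗ g)_γ|² b_γ^{-q} ≤ C² ∑_{αβ=γ} |f_α|² b_α^{-p} |g_β|² b_β^{-q}`, since `b_γ = b_α b_β`
and distinct factorizations of `γ` have distinct left factors. Summing over `γ` turns the right
side into a sum over all pairs `(α, β)`, which is `C² ‖f‖_p² ‖g‖_q²`. -/

open Finset

namespace FreeMonoid

variable {α : Type*}

theorem ofList_take_mul_ofList_drop (γ : FreeMonoid α) (j : ℕ) :
    ofList (γ.toList.take j) * ofList (γ.toList.drop j) = γ := by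
  rw [← ofList_append, List.take_append_drop, ofList_toList]

/-- A word of length `n` has `n + 1` factorizations `γ = αβ`, indexed by the length of `α`. -/
def splitEquiv :
    (Σ γ : FreeMonoid α, Fin (γ.toList.length + 1)) ≃ FreeMonoid α × FreeMonoid α where
  toFun x := (ofList (x.1.toList.take x.2), ofList (x.1.toList.drop x.2))
  invFun y := ⟨y.1 * y.2, ⟨y.1.toList.length, by simp [toList_mul]⟩⟩
  left_inv := by
    rintro ⟨γ, j, hj⟩
    have hγ := ofList_take_mul_ofList_drop γ j
    refine Sigma.ext hγ ?_
    rw [Fin.heq_ext_iff (congrArg (fun x => x.toList.length + 1) hγ)]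
    simp [Nat.lt_succ_iff.mp hj]
  right_inv := by
    rintro ⟨α, β⟩
    simp [toList_mul]

def sumSplits {M : Type*} [AddCommMonoid M] (K : FreeMonoid α × FreeMonoid α → M)
    (γ : FreeMonoid α) : M :=
  ∑ j ∈ range (γ.toList.length + 1), K (ofList (γ.toList.take j), ofList (γ.toList.drop j))

theorem hasSum_sumSplits {M : Type*} [AddCommMonoid M] [TopologicalSpace M] [ContinuousAdd M]
    [RegularSpace M] {K : FreeMonoid α × FreeMonoid α → M} {a : M} (h : HasSum K a) :
    HasSum (sumSplits K) a := by
  refine (splitEquiv.hasSum_iff.mpr h).sigma fun γ => ?_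
  convert hasSum_fintype _
  exact (Fin.sum_univ_eq_sum_range
    (fun j => K (ofList (γ.toList.take j), ofList (γ.toList.drop j))) _).symm

theorem sum_range_le_tsum_ofList_take {w : FreeMonoid α → ℝ} (hw : ∀ α, 0 ≤ w α)
    (hsum : Summable w) (γ : FreeMonoid α) :
    ∑ j ∈ range (γ.toList.length + 1), w (ofList (γ.toList.take j)) ≤ ∑' α, w α := by
  have hinj : Set.InjOn (fun j => ofList (γ.toList.take j)) (range (γ.toList.length + 1)) := by
    intro i hi j hj hij
    have := congrArg (fun x : FreeMonoid α => x.toList.length) hij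
    simp only [mem_coe, mem_range, Nat.lt_succ_iff] at hi hj
    simpa [hi, hj] using this
  classical
  rw [← sum_image hinj]
  exact hsum.sum_le_tsum _ fun α _ => hw α

end FreeMonoid

open FreeMonoid

theorem norm_wick_le_sumSplits (f g : FreeMonoid ℕ → ℂ) (γ : FreeMonoid ℕ) :
    ‖wick f g γ‖ ≤ sumSplits (fun x => ‖f x.1‖ * ‖g x.2‖) γ :=
  (norm_sum_le _ _).trans (sum_le_sum fun _ _ => norm_mul_le _ _)

theorem norm_wick_sq_mul_zpow_le (b : FreeMonoid ℕ → ℝ) (hb : ∀ α, 0 < b α)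
    (hbmul : ∀ α β, b (α * β) = b α * b β) (p q : ℤ)
    (hC : Summable (fun α : FreeMonoid ℕ => b α ^ (-(q - p)))) (f g : FreeMonoid ℕ → ℂ)
    (γ : FreeMonoid ℕ) :
    ‖wick f g γ‖ ^ 2 * b γ ^ (-q) ≤ (∑' α, b α ^ (-(q - p))) *
      sumSplits (fun x => ‖f x.1‖ ^ 2 * b x.1 ^ (-p) * (‖g x.2‖ ^ 2 * b x.2 ^ (-q))) γ := by
  set s := range (γ.toList.length + 1)
  set t : ℕ → FreeMonoid ℕ := fun j => ofList (γ.toList.take j)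
  set d : ℕ → FreeMonoid ℕ := fun j => ofList (γ.toList.drop j)
  set w : ℕ → ℝ := fun j => b (t j) ^ (-(q - p))
  set a : ℕ → ℝ := fun j => ‖f (t j)‖ * ‖g (d j)‖
  have hw : ∀ j ∈ s, 0 < w j := fun j _ => zpow_pos (hb _) _
  have hbγ : 0 ≤ b γ ^ (-q) := (zpow_pos (hb γ) _).le
  -- Weighted Cauchy–Schwarz: dividing by `w j` leaves `b(t)^{q-p}`,
  -- which turns `b(t)^{-q}` into `b(t)^{-p}`.
  have hcs : (∑ j ∈ s, a j) ^ 2 ≤ (∑ j ∈ s, w j) * ∑ j ∈ s, a j ^ 2 / w j :=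
    (div_le_iff₀' (sum_pos hw ⟨0, by simp [s]⟩)).mp (sq_sum_div_le_sum_sq_div s a hw)
  have hterm : ∀ j, a j ^ 2 / w j * b γ ^ (-q) =
      ‖f (t j)‖ ^ 2 * b (t j) ^ (-p) * (‖g (d j)‖ ^ 2 * b (d j) ^ (-q)) := by
    intro j
    have hexp : b (t j) ^ (-q) / b (t j) ^ (-(q - p)) = b (t j) ^ (-p) := by
      rw [← zpow_sub₀ (hb _).ne']; ring_nf
    rw [← ofList_take_mul_ofList_drop γ j, hbmul, mul_zpow, ← hexp]
    simp only [a, w, t, d]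
    ring
  calc ‖wick f g γ‖ ^ 2 * b γ ^ (-q)
      ≤ (∑ j ∈ s, a j) ^ 2 * b γ ^ (-q) := by
        gcongr
        exact norm_wick_le_sumSplits f g γ
    _ ≤ ((∑' α, b α ^ (-(q - p))) * ∑ j ∈ s, a j ^ 2 / w j) * b γ ^ (-q) := by
        gcongr ?_ * _
        refine hcs.trans (mul_le_mul_of_nonneg_right ?_ ?_)
        · exact sum_range_le_tsum_ofList_take (fun α => (zpow_pos (hb α) _).le) hC γ
        · exact sum_nonneg fun j hj => div_nonneg (sq_nonneg _) (hw j hj).le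
    _ = _ := by
        rw [mul_assoc, sum_mul]
        exact congrArg _ (sum_congr rfl fun j _ => hterm j)

/-- Non-commutative Våge-type inequality (squared form). Let `b : ℓ̃ → [1,∞)` be a monoid
homomorphism and set `‖f‖_p² = ∑_α |f_α|² b_α^{-p}`. If `C² = ∑_α b_α^{-(q-p)} < ∞`, then
for `f` with `‖f‖_p < ∞` and `g` with `‖g‖_q < ∞` one has
`‖f ⊗ g‖_q² ≤ C² ‖f‖_p² ‖g‖_q²`, i.e. `‖f ⊗ g‖_q ≤ C ‖f‖_p ‖g‖_q`. -/
theorem vage_inequality (b : FreeMonoid ℕ → ℝ) (hb1 : ∀ α, 1 ≤ b α)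
    (hbmul : ∀ α β, b (α * β) = b α * b β)
    (p q : ℤ) (hC : Summable (fun α : FreeMonoid ℕ => b α ^ (-(q - p))))
    (f g : FreeMonoid ℕ → ℂ)
    (hf : Summable (fun α => ‖f α‖ ^ 2 * b α ^ (-p)))
    (hg : Summable (fun α => ‖g α‖ ^ 2 * b α ^ (-q))) :
    Summable (fun γ => ‖wick f g γ‖ ^ 2 * b γ ^ (-q)) ∧
      (∑' γ, ‖wick f g γ‖ ^ 2 * b γ ^ (-q)) ≤
        (∑' α : FreeMonoid ℕ, b α ^ (-(q - p))) *
          ((∑' α, ‖f α‖ ^ 2 * b α ^ (-p)) * ∑' α, ‖g α‖ ^ 2 * b α ^ (-q)) := by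
  have hb : ∀ α, 0 < b α := fun α => one_pos.trans_le (hb1 α)
  have hsplits := hasSum_sumSplits (hf.hasSum.mul hg.hasSum
    (hf.mul_of_nonneg hg (fun α => by have := hb α; positivity)
      fun α => by have := hb α; positivity))
  have hbound := norm_wick_sq_mul_zpow_le b hb hbmul p q hC f g
  have hdom := hsplits.summable.mul_left (∑' α, b α ^ (-(q - p)))
  have hsum : Summable (fun γ => ‖wick f g γ‖ ^ 2 * b γ ^ (-q)) :=
    .of_nonneg_of_le (fun γ => by have := hb γ; positivity) hbound hdom
  refine ⟨hsum, ?_⟩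
  calc (∑' γ, ‖wick f g γ‖ ^ 2 * b γ ^ (-q))
      ≤ ∑' γ, (∑' α, b α ^ (-(q - p))) * sumSplits _ γ := hsum.tsum_le_tsum hbound hdom
    _ = _ := by rw [tsum_mul_left, hsplits.tsum_eq]
end

section
/- In the non-commutative Kondratiev space with weights a_n = 2n, for any q ≥ p + 2 one has ∑_{α∈ℓ̃} (2ℕ)^{-α(q-p)} = 1/(1 − 2^{-(q-p)} ζ(q-p)), and in particular this sum is finite. -/
open Real

/-- The weight `(2ℕ)^α = ∏_k (2 i_k)` of a word in the free monoid on ℕ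
(the letter `i : ℕ` represents `z_{i+1}`). -/
noncomputable def ncWeight (α : FreeMonoid ℕ) : ℝ :=
  (FreeMonoid.toList α |>.map (fun i => (2 * (i + 1) : ℝ))).prod

private lemma ncWeight_ofList (l : List ℕ) :
    ncWeight (FreeMonoid.ofList l) = (l.map (fun i : ℕ => (2 * ((i : ℝ) + 1)))).prod := by
  induction l with
  | nil => simp [ncWeight]
  | cons a l ih =>
    simp only [ncWeight] at ih ⊢
    simp_all [List.map_cons, List.prod_cons]

private lemma zpow_list_prod (l : List ℕ) (c : ℕ → ℝ) (z : ℤ) :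
    ((l.map c).prod) ^ z = (l.map (fun i => c i ^ z)).prod := by
  induction l with
  | nil => simp
  | cons a l ih =>
    rw [List.map_cons, List.map_cons, List.prod_cons, List.prod_cons, mul_zpow, ih]

private lemma hasSum_pi_prod {f : ℕ → ℝ} (hf0 : ∀ i, 0 ≤ f i) (hf : Summable f) :
    ∀ n : ℕ, HasSum (fun g : Fin n → ℕ => ∏ i, f (g i)) ((∑' i, f i) ^ n) := by
  intro n
  induction n with
  | zero => simpa using hasSum_fintype (fun g : Fin 0 → ℕ => ∏ i : Fin 0, f (g i))
  | succ n ih =>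
    have hs : Summable (fun x : ℕ × (Fin n → ℕ) => f x.1 * ∏ i, f (x.2 i)) :=
      Summable.mul_of_nonneg (f := f) (g := fun g : Fin n → ℕ => ∏ i, f (g i)) hf
        ih.summable (fun i => hf0 i) (fun g => Finset.prod_nonneg fun i _ => hf0 _)
    have hmul : HasSum (fun x : ℕ × (Fin n → ℕ) => f x.1 * ∏ i, f (x.2 i))
        ((∑' i, f i) * (∑' i, f i) ^ n) :=
      HasSum.mul (f := f) (g := fun g : Fin n → ℕ => ∏ i, f (g i)) hf.hasSum ih hs
    rw [pow_succ, mul_comm]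
    refine (((Fin.consEquiv fun _ : Fin (n + 1) => ℕ)).hasSum_iff).1 ?_
    convert hmul using 1
    funext p
    simp [Fin.consEquiv, Fin.prod_univ_succ]

private lemma hasSum_list {f : ℕ → ℝ} (hf0 : ∀ i, 0 ≤ f i) (hf : Summable f)
    (hr : ∑' i, f i < 1) :
    HasSum (fun l : List ℕ => (l.map f).prod) (1 - ∑' i, f i)⁻¹ := by
  set r := ∑' i, f i with hrdef
  have hr0 : 0 ≤ r := tsum_nonneg hf0
  have hgeo : HasSum (fun n : ℕ => r ^ n) (1 - r)⁻¹ := hasSum_geometric_of_lt_one hr0 hr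
  set F : (Σ n : ℕ, Fin n → ℕ) → ℝ := fun x => ∏ i, f (x.2 i) with hFdef
  have hF0 : ∀ x, 0 ≤ F x := fun x => Finset.prod_nonneg fun i _ => hf0 _
  have hfib : ∀ n : ℕ, HasSum (fun g : Fin n → ℕ => F ⟨n, g⟩) (r ^ n) :=
    fun n => hasSum_pi_prod hf0 hf n
  have hsumF : Summable F := by
    refine (summable_sigma_of_nonneg hF0).2 ⟨fun n => (hfib n).summable, ?_⟩
    have : (fun n : ℕ => ∑' g : Fin n → ℕ, F ⟨n, g⟩) = fun n : ℕ => r ^ n := by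
      funext n; exact (hfib n).tsum_eq
    rw [this]; exact hgeo.summable
  have htsum : ∑' x, F x = (1 - r)⁻¹ := by
    rw [Summable.tsum_sigma' (fun n => (hfib n).summable) hsumF]
    calc (∑' n : ℕ, ∑' g : Fin n → ℕ, F ⟨n, g⟩) = ∑' n : ℕ, r ^ n :=
          tsum_congr fun n => (hfib n).tsum_eq
      _ = (1 - r)⁻¹ := hgeo.tsum_eq
  have hF : HasSum F (1 - r)⁻¹ := htsum ▸ hsumF.hasSum
  have hfun : (fun l : List ℕ => (l.map f).prod) ∘ (List.equivSigmaTuple (α := ℕ)).symm = F := by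
    funext x
    obtain ⟨n, g⟩ := x
    simp [List.equivSigmaTuple, List.map_ofFn, List.prod_ofFn, hFdef, Function.comp]
  exact ((List.equivSigmaTuple (α := ℕ)).symm.hasSum_iff).1 (hfun ▸ hF)

/-- In the non-commutative Kondratiev space (weights `a_n = 2n`), for any `q ≥ p + 2` one
has `∑_{α ∈ ℓ̃} (2ℕ)^{-α(q-p)} = 1/(1 − 2^{-(q-p)} ζ(q-p))`, where
`ζ(s) = ∑_{n=1}^∞ n^{-s}`; in particular the sum is finite. -/
theorem sum_ncWeight_eq (p q : ℕ) (hpq : p + 2 ≤ q) :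
    Summable (fun α : FreeMonoid ℕ => ncWeight α ^ (-((q : ℤ) - p))) ∧
      (∑' α : FreeMonoid ℕ, ncWeight α ^ (-((q : ℤ) - p))) =
        (1 - (2 : ℝ) ^ (-((q : ℤ) - p)) *
          ∑' n : ℕ, ((n + 1 : ℝ)) ^ (-((q : ℤ) - p)))⁻¹ := by
  obtain ⟨k, hk, hkq⟩ : ∃ k : ℕ, 2 ≤ k ∧ (q : ℤ) - p = (k : ℤ) :=
    ⟨q - p, by omega, by omega⟩
  rw [hkq]
  set f : ℕ → ℝ := fun i => (2 * ((i : ℝ) + 1)) ^ (-(k : ℤ)) with hfdef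
  have hpos : ∀ i : ℕ, (0 : ℝ) < 2 * ((i : ℝ) + 1) := by intro i; positivity
  have hf0 : ∀ i, 0 ≤ f i := fun i => zpow_nonneg (hpos i).le _
  set g : ℕ → ℝ := fun i => (1 / 4) * (1 / ((i : ℝ) + 1) ^ 2) with hgdef
  have hgsum : HasSum g ((1 / 4) * (π ^ 2 / 6)) := by
    have h0 : HasSum (fun n : ℕ => (1 : ℝ) / ((n : ℝ) + 1) ^ 2) (π ^ 2 / 6) := by
      have h := (hasSum_nat_add_iff (f := fun n : ℕ => (1 : ℝ) / (n : ℝ) ^ 2)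
        (g := π ^ 2 / 6) 1).2 (by simpa using hasSum_zeta_two)
      simpa [Nat.cast_add] using h
    exact h0.mul_left _
  have hle : ∀ i, f i ≤ g i := by
    intro i
    have h1 : (1 : ℝ) ≤ 2 * ((i : ℝ) + 1) := by
      have : (0 : ℝ) ≤ (i : ℝ) := Nat.cast_nonneg i
      nlinarith
    have h2 : (2 * ((i : ℝ) + 1)) ^ 2 ≤ (2 * ((i : ℝ) + 1)) ^ k :=
      pow_le_pow_right₀ h1 hk
    have hfi : f i = ((2 * ((i : ℝ) + 1)) ^ k)⁻¹ := by
      simp only [hfdef]; rw [zpow_neg, zpow_natCast]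
    have hgi : g i = ((2 * ((i : ℝ) + 1)) ^ 2)⁻¹ := by
      simp only [hgdef]
      have : ((i : ℝ) + 1) ≠ 0 := by positivity
      field_simp
      ring
    rw [hfi, hgi]
    exact inv_anti₀ (by positivity) h2
  have hfsum : Summable f := Summable.of_nonneg_of_le hf0 hle hgsum.summable
  have hrlt : ∑' i, f i < 1 := by
    have hb : ∑' i, f i ≤ (1 / 4) * (π ^ 2 / 6) :=
      calc ∑' i, f i ≤ ∑' i, g i := Summable.tsum_le_tsum hle hfsum hgsum.summable
        _ = (1 / 4) * (π ^ 2 / 6) := hgsum.tsum_eq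
    nlinarith [Real.pi_le_four, Real.pi_pos]
  have hmain := hasSum_list hf0 hfsum hrlt
  have hkey : (fun α : FreeMonoid ℕ => ncWeight α ^ (-(k : ℤ)))
      = (fun l : List ℕ => (l.map f).prod) ∘ FreeMonoid.toList := by
    funext α
    show ncWeight α ^ (-(k : ℤ)) = ((FreeMonoid.toList α).map f).prod
    have h1 : ncWeight α = ((FreeMonoid.toList α).map
        (fun i : ℕ => (2 * ((i : ℝ) + 1)))).prod := by
      have := ncWeight_ofList (FreeMonoid.toList α)
      simpa using this
    rw [h1, zpow_list_prod]
  have hsum' : HasSum (fun α : FreeMonoid ℕ => ncWeight α ^ (-(k : ℤ)))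
      ((1 - ∑' i, f i)⁻¹) := by
    rw [hkey]
    exact (FreeMonoid.toList.hasSum_iff).2 hmain
  have hrval : (2 : ℝ) ^ (-(k : ℤ)) * ∑' n : ℕ, ((n : ℝ) + 1) ^ (-(k : ℤ)) = ∑' i, f i := by
    rw [← tsum_mul_left]
    exact tsum_congr fun n => (mul_zpow 2 ((n : ℝ) + 1) (-(k : ℤ))).symm
  refine ⟨hsum'.summable, ?_⟩
  rw [hsum'.tsum_eq, hrval]
end

section
/- Let φ(z) = ∑_{n≥0} φ_n z^n be a complex power series converging absolutely on the open disk of radius R, and let f ∈ S̃_{-1} with |E[f]| < R/B₂. Then the series ∑_{n≥0} φ_n f^{⊗n} converges in some L²(ℓ̃, μ_{-p}), hence defines an element of S̃_{-1}. -/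
/-- Wick powers: iterated convolutions, `f^{⊗0}` the indicator of the empty word. -/
noncomputable def wickPow (f : FreeMonoid ℕ → ℂ) : ℕ → FreeMonoid ℕ → ℂ
  | 0 => fun γ => if FreeMonoid.toList γ = [] then 1 else 0
  | n + 1 => wick f (wickPow f n)

/-!
The Wick product is estimated by Cauchy–Schwarz over the factorisations `γ = αβ` with weights
`(2ℕ)^{-α}`: since `(2ℕ)^{-γ} = (2ℕ)^{-α} (2ℕ)^{-β}` and
`∑_α (2ℕ)^{-2α} = ∑_n (2^{-2} ζ(2))^n = B₂²`, this gives `‖f ⊗ g‖²_{q+2} ≤ B₂² ‖f‖²_q ‖g‖²_{q+2}`,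
hence `‖f^{⊗n}‖_{q+2} ≤ (B₂ ‖f‖_q)^n`. A non-empty word has `(2ℕ)^{-α} ≤ 1/2`, so
`‖f‖_q → |E[f]|` as `q → ∞`; choosing `q` with `B₂ ‖f‖_q < r < R` makes
`∑ |φ_n| ‖f^{⊗n}‖_{q+2} ≤ ∑ |φ_n| r^n` finite, so the series converges in the Hilbert space
`L²(ℓ̃, μ_{-q-2})`, on which evaluation at a word is continuous.
-/

open scoped ENNReal NNReal
open Finset Filter Topology

lemma summable_sq_tsum_of_summable_sqrt {ι E : Type*} [NormedAddCommGroup E] [NormedSpace ℝ E]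
    [CompleteSpace E] {w : ι → ℝ} (hw : ∀ i, 0 < w i) {a : ℕ → ι → E}
    (ha : ∀ n, Summable fun i => ‖a n i‖ ^ 2 * w i)
    (hs : Summable fun n => √(∑' i, ‖a n i‖ ^ 2 * w i)) :
    (∀ i, Summable fun n => a n i) ∧ Summable fun i => ‖∑' n, a n i‖ ^ 2 * w i := by
  have hsq : ∀ i (x : E), ‖√(w i) • x‖ ^ (2 : ℝ≥0∞).toReal = ‖x‖ ^ 2 * w i := fun i x => by
    rw [ENNReal.toReal_ofNat, Real.rpow_two, norm_smul, mul_pow,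
      Real.norm_of_nonneg (Real.sqrt_nonneg _), Real.sq_sqrt (hw i).le, mul_comm]
  have hmem : ∀ n, Memℓp (fun i => √(w i) • a n i) 2 := fun n =>
    (memℓp_gen_iff (by norm_num)).2 (by simpa only [hsq] using ha n)
  let A : ℕ → lp (fun _ : ι => E) 2 := fun n => ⟨_, hmem n⟩
  have hA : ∀ n, ‖A n‖ = √(∑' i, ‖a n i‖ ^ 2 * w i) := fun n => by
    rw [lp.norm_eq_tsum_rpow (by norm_num), Real.sqrt_eq_rpow]
    simp only [A, hsq]
    norm_num
  obtain ⟨G, hG⟩ : Summable A := Summable.of_norm (by simpa only [hA] using hs)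
  have hsum : ∀ i, HasSum (fun n => a n i) ((√(w i))⁻¹ • G i) := fun i => by
    simpa [A, lp.evalCLM, smul_smul, (Real.sqrt_pos.2 (hw i)).ne'] using
      ((lp.evalCLM ℝ (fun _ : ι => E) 2 i).hasSum hG).const_smul (√(w i))⁻¹
  refine ⟨fun i => (hsum i).summable, ?_⟩
  simp_rw [fun i => (hsum i).tsum_eq]
  refine ((memℓp_gen_iff (p := 2) (by norm_num)).1 G.2).congr fun i => ?_
  rw [← hsq i, smul_smul, mul_inv_cancel₀ (Real.sqrt_pos.2 (hw i)).ne', one_smul]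

lemma ENNReal.tsum_fin_pi_prod {α : Type*} (g : α → ℝ≥0∞) (n : ℕ) :
    ∑' x : Fin n → α, ∏ i, g (x i) = (∑' a, g a) ^ n := by
  induction n with
  | zero => simp
  | succ n ih =>
    rw [← (Fin.consEquiv fun _ => α).tsum_eq, ENNReal.tsum_prod', pow_succ', ← ih,
      ← ENNReal.tsum_mul_right]
    simp [Fin.consEquiv, Fin.prod_univ_succ, ENNReal.tsum_mul_left]

namespace FreeMonoid

variable {α : Type*}

lemma tsum_lift (g : α → ℝ≥0∞) :
    ∑' w : FreeMonoid α, lift g w = ∑' n : ℕ, (∑' a, g a) ^ n := by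
  rw [← (toList.trans List.equivSigmaTuple).symm.tsum_eq, ENNReal.tsum_sigma']
  simp [lift_apply, List.map_ofFn, List.prod_ofFn, ENNReal.tsum_fin_pi_prod]

variable [DecidableEq α]

instance : DecidableEq (FreeMonoid α) := inferInstanceAs (DecidableEq (List α))

def splits (γ : FreeMonoid α) : Finset (FreeMonoid α × FreeMonoid α) :=
  (range ((toList γ).length + 1)).image fun j =>
    (ofList ((toList γ).take j), ofList ((toList γ).drop j))

lemma mem_splits {γ : FreeMonoid α} {x : FreeMonoid α × FreeMonoid α} :
    x ∈ splits γ ↔ x.1 * x.2 = γ := by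
  constructor
  · intro hx
    obtain ⟨j, -, rfl⟩ := mem_image.1 hx
    exact toList.injective (List.take_append_drop _ _)
  · rintro rfl
    refine mem_image.2 ⟨(toList x.1).length, by simp, ?_⟩
    simp [toList_mul]

lemma tsum_sum_splits (H : FreeMonoid α × FreeMonoid α → ℝ≥0∞) :
    ∑' γ, ∑ x ∈ splits γ, H x = ∑' x, H x := by
  have h : ∀ γ, ∑ x ∈ splits γ, H x = ∑' x, if x.1 * x.2 = γ then H x else 0 := fun γ => by
    rw [tsum_eq_sum (s := splits γ) fun x hx => if_neg (mt mem_splits.2 hx)]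
    exact sum_congr rfl fun x hx => (if_pos (mem_splits.1 hx)).symm
  simp_rw [h]
  rw [ENNReal.tsum_comm]
  simp

lemma sum_splits_le_tsum (γ : FreeMonoid α) (g : FreeMonoid α → ℝ≥0∞) :
    ∑ x ∈ splits γ, g x.1 ≤ ∑' a, g a := by
  have hinj : Set.InjOn Prod.fst (splits γ : Set (FreeMonoid α × FreeMonoid α)) := by
    intro x hx y hy hxy
    have h := (mem_splits.1 hx).trans (mem_splits.1 hy).symm
    rw [hxy] at h
    exact Prod.ext hxy (mul_left_cancel h)
  rw [← sum_image hinj]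
  exact ENNReal.sum_le_tsum _

end FreeMonoid

namespace Wick

open FreeMonoid (splits mem_splits sum_splits_le_tsum tsum_sum_splits)

noncomputable def letterInvWeight (i : ℕ) : ℝ≥0 := (2 * (i + 1))⁻¹

/-- `invWeight γ = (2ℕ)^{-γ}`, so that `μ_{-p}(γ) = invWeight γ ^ p`. -/
noncomputable def invWeight : FreeMonoid ℕ →* ℝ≥0 := FreeMonoid.lift letterInvWeight

lemma invWeight_of_mul (i : ℕ) (γ : FreeMonoid ℕ) :
    invWeight (.of i * γ) = letterInvWeight i * invWeight γ := by
  rw [map_mul, invWeight, FreeMonoid.lift_eval_of]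

lemma letterInvWeight_le_half (i : ℕ) : letterInvWeight i ≤ 2⁻¹ := by
  unfold letterInvWeight
  gcongr
  simp

lemma invWeight_ne_zero (γ : FreeMonoid ℕ) : invWeight γ ≠ 0 := by
  induction γ using FreeMonoid.inductionOn' with
  | one => simp
  | of_mul i γ ih => simp [invWeight_of_mul, ih, letterInvWeight]

lemma invWeight_le_one (γ : FreeMonoid ℕ) : invWeight γ ≤ 1 := by
  induction γ using FreeMonoid.inductionOn' with
  | one => simp
  | of_mul i γ ih =>
    rw [invWeight_of_mul]
    exact mul_le_one' ((letterInvWeight_le_half i).trans (by norm_num)) ih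

lemma invWeight_le_half {γ : FreeMonoid ℕ} (hγ : γ ≠ 1) : invWeight γ ≤ 2⁻¹ := by
  induction γ using FreeMonoid.casesOn with
  | one => exact absurd rfl hγ
  | of_mul i γ =>
    rw [invWeight_of_mul]
    simpa using mul_le_mul' (letterInvWeight_le_half i) (invWeight_le_one γ)

lemma ncWeight_of_mul (i : ℕ) (γ : FreeMonoid ℕ) :
    ncWeight (.of i * γ) = 2 * (i + 1) * ncWeight γ := by
  simp [ncWeight]

lemma coe_invWeight (γ : FreeMonoid ℕ) : (invWeight γ : ℝ) = (ncWeight γ)⁻¹ := by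
  induction γ using FreeMonoid.inductionOn' with
  | one => simp [ncWeight]
  | of_mul i γ ih =>
    rw [invWeight_of_mul, ncWeight_of_mul, NNReal.coe_mul, ih, mul_inv, letterInvWeight]
    push_cast
    rfl

lemma ncWeight_pos (γ : FreeMonoid ℕ) : 0 < ncWeight γ := by
  rw [← inv_pos, ← coe_invWeight]
  exact (invWeight_ne_zero γ).bot_lt

lemma ncWeight_zpow_neg (γ : FreeMonoid ℕ) (p : ℕ) :
    ncWeight γ ^ (-(p : ℤ)) = (invWeight γ : ℝ) ^ p := by
  rw [coe_invWeight, zpow_neg, zpow_natCast, inv_pow]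

noncomputable def B₂sq : ℝ := (1 - (2 : ℝ) ^ (-2 : ℤ) * ∑' n : ℕ, ((n + 1 : ℝ)) ^ (-2 : ℤ))⁻¹

lemma hasSum_inv_succ_sq : HasSum (fun n : ℕ => ((n + 1 : ℝ)) ^ (-2 : ℤ)) (Real.pi ^ 2 / 6) := by
  simpa [zpow_neg, one_div] using (hasSum_nat_add_iff' 1).2 hasSum_zeta_two

lemma quarter_zeta_two_lt_one :
    (2 : ℝ) ^ (-2 : ℤ) * ∑' n : ℕ, ((n + 1 : ℝ)) ^ (-2 : ℤ) < 1 := by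
  rw [hasSum_inv_succ_sq.tsum_eq]
  have := Real.pi_lt_d2
  norm_num
  nlinarith [Real.pi_pos]

lemma B₂sq_pos : 0 < B₂sq := inv_pos.2 (sub_pos.2 quarter_zeta_two_lt_one)

lemma tsum_letterInvWeight_sq :
    ∑' i, (letterInvWeight i : ℝ≥0∞) ^ 2 =
      ENNReal.ofReal ((2 : ℝ) ^ (-2 : ℤ) * ∑' n : ℕ, ((n + 1 : ℝ)) ^ (-2 : ℤ)) := by
  rw [← tsum_mul_left, ENNReal.ofReal_tsum_of_nonneg (fun _ => by positivity)
    (hasSum_inv_succ_sq.summable.mul_left _)]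
  refine tsum_congr fun i => ?_
  rw [← ENNReal.ofReal_coe_nnreal, ← ENNReal.ofReal_pow NNReal.zero_le_coe, letterInvWeight]
  congr 1
  push_cast
  rw [zpow_neg, zpow_neg, zpow_ofNat, zpow_ofNat, inv_pow, mul_pow, mul_inv]

lemma tsum_invWeight_sq : ∑' γ, (invWeight γ : ℝ≥0∞) ^ 2 = ENNReal.ofReal B₂sq := by
  have hlift : (fun γ => (invWeight γ : ℝ≥0∞) ^ 2) =
      FreeMonoid.lift fun i => (letterInvWeight i : ℝ≥0∞) ^ 2 := by
    funext γ
    exact DFunLike.congr_fun (FreeMonoid.comp_lift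
      ((powMonoidHom 2).comp ENNReal.ofNNRealHom.toMonoidHom) letterInvWeight) γ
  rw [hlift, FreeMonoid.tsum_lift, tsum_letterInvWeight_sq, ENNReal.tsum_geometric, B₂sq,
    ← ENNReal.ofReal_one, ← ENNReal.ofReal_sub _ (by positivity),
    ENNReal.ofReal_inv_of_pos (sub_pos.2 quarter_zeta_two_lt_one)]

noncomputable def weightedSq (p : ℕ) (F : FreeMonoid ℕ → ℂ) (γ : FreeMonoid ℕ) : ℝ≥0 :=
  ‖F γ‖₊ ^ 2 * invWeight γ ^ p

/-- `‖F‖²` in `L²(ℓ̃, μ_{-p})`, taken in `ℝ≥0∞` so that it needs no summability side condition. -/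
noncomputable def weightedSqNorm (p : ℕ) (F : FreeMonoid ℕ → ℂ) : ℝ≥0∞ :=
  ∑' γ, (weightedSq p F γ : ℝ≥0∞)

lemma coe_weightedSq (p : ℕ) (F : FreeMonoid ℕ → ℂ) (γ : FreeMonoid ℕ) :
    (weightedSq p F γ : ℝ) = ‖F γ‖ ^ 2 * ncWeight γ ^ (-(p : ℤ)) := by
  rw [ncWeight_zpow_neg, weightedSq]
  push_cast
  rfl

lemma summable_iff_weightedSqNorm_ne_top (p : ℕ) (F : FreeMonoid ℕ → ℂ) :
    Summable (fun γ => ‖F γ‖ ^ 2 * ncWeight γ ^ (-(p : ℤ))) ↔ weightedSqNorm p F ≠ ∞ := by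
  simp_rw [← coe_weightedSq, NNReal.summable_coe, weightedSqNorm,
    ENNReal.tsum_coe_ne_top_iff_summable]

lemma tsum_eq_toReal_weightedSqNorm (p : ℕ) (F : FreeMonoid ℕ → ℂ) :
    ∑' γ, ‖F γ‖ ^ 2 * ncWeight γ ^ (-(p : ℤ)) = (weightedSqNorm p F).toReal := by
  simp_rw [← coe_weightedSq, weightedSqNorm,
    ENNReal.tsum_toReal_eq (fun _ => ENNReal.coe_ne_top), ENNReal.coe_toReal]

lemma weightedSq_one (q : ℕ) (F : FreeMonoid ℕ → ℂ) : weightedSq q F 1 = ‖F 1‖₊ ^ 2 := by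
  simp [weightedSq]

lemma weightedSq_add_le (p k : ℕ) (F : FreeMonoid ℕ → ℂ) {γ : FreeMonoid ℕ} (hγ : γ ≠ 1) :
    weightedSq (p + k) F γ ≤ 2⁻¹ ^ k * weightedSq p F γ := by
  calc weightedSq (p + k) F γ = weightedSq p F γ * invWeight γ ^ k := by
        rw [weightedSq, weightedSq, pow_add, mul_assoc]
    _ ≤ weightedSq p F γ * 2⁻¹ ^ k := by gcongr; exact invWeight_le_half hγ
    _ = 2⁻¹ ^ k * weightedSq p F γ := mul_comm _ _

lemma weightedSqNorm_add_le (p k : ℕ) (F : FreeMonoid ℕ → ℂ) :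
    weightedSqNorm (p + k) F ≤ (‖F 1‖₊ : ℝ≥0∞) ^ 2 + 2⁻¹ ^ k * weightedSqNorm p F := by
  rw [weightedSqNorm, ENNReal.tsum_eq_add_tsum_ite 1, weightedSq_one, weightedSqNorm,
    ← ENNReal.tsum_mul_left, ENNReal.coe_pow]
  gcongr with γ
  split_ifs with hγ
  · exact zero_le
  · simpa [ENNReal.inv_pow] using ENNReal.coe_le_coe.2 (weightedSq_add_le p k F hγ)

lemma tendsto_weightedSqNorm {p : ℕ} {F : FreeMonoid ℕ → ℂ} (hF : weightedSqNorm p F ≠ ∞) :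
    Tendsto (fun q => weightedSqNorm q F) atTop (𝓝 ((‖F 1‖₊ : ℝ≥0∞) ^ 2)) := by
  refine (tendsto_add_atTop_iff_nat p).1 ?_
  have hupper : Tendsto (fun k : ℕ => (‖F 1‖₊ : ℝ≥0∞) ^ 2 + 2⁻¹ ^ k * weightedSqNorm p F) atTop
      (𝓝 ((‖F 1‖₊ : ℝ≥0∞) ^ 2)) := by
    simpa using tendsto_const_nhds.add (ENNReal.Tendsto.mul_const
      (ENNReal.tendsto_pow_atTop_nhds_zero_of_lt_one (by norm_num)) (Or.inr hF))
  refine tendsto_of_tendsto_of_tendsto_of_le_of_le tendsto_const_nhds hupper (fun q => ?_)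
    fun k => add_comm k p ▸ weightedSqNorm_add_le p k F
  calc (‖F 1‖₊ : ℝ≥0∞) ^ 2 = weightedSq (q + p) F 1 := by rw [weightedSq_one, ENNReal.coe_pow]
    _ ≤ weightedSqNorm (q + p) F := ENNReal.le_tsum 1

lemma wick_eq_sum_splits (F G : FreeMonoid ℕ → ℂ) (γ : FreeMonoid ℕ) :
    wick F G γ = ∑ x ∈ splits γ, F x.1 * G x.2 := by
  rw [wick, splits, sum_image]
  intro j hj k hk hjk
  have := congrArg (fun x => (FreeMonoid.toList x.1).length) hjk
  simp_all

lemma weightedSq_wick_le (F G : FreeMonoid ℕ → ℂ) (q : ℕ) (γ : FreeMonoid ℕ) :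
    weightedSq (q + 2) (wick F G) γ ≤
      (∑ x ∈ splits γ, invWeight x.1 ^ 2) *
        ∑ x ∈ splits γ, weightedSq q F x.1 * weightedSq (q + 2) G x.2 := by
  set t := invWeight γ ^ (q + 2)
  have hnorm : ‖wick F G γ‖₊ ≤ ∑ x ∈ splits γ, ‖F x.1‖₊ * ‖G x.2‖₊ := by
    rw [wick_eq_sum_splits]
    exact (nnnorm_sum_le _ _).trans_eq (sum_congr rfl fun _ _ => nnnorm_mul _ _)
  calc weightedSq (q + 2) (wick F G) γ
      ≤ (∑ x ∈ splits γ, ‖F x.1‖₊ * ‖G x.2‖₊ * NNReal.sqrt t) ^ 2 := by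
        rw [← sum_mul, mul_pow, NNReal.sq_sqrt, weightedSq]
        gcongr
    _ ≤ _ := by
        -- Cauchy–Schwarz with weights `invWeight x.1 ^ 2`: these are exactly the two powers that
        -- `F` loses in passing from `q + 2` to `q`, once `t` is split along `γ = x.1 * x.2`.
        refine sum_sq_le_sum_mul_sum_of_sq_le_mul _ (fun _ _ => zero_le) (fun _ _ => zero_le)
          fun x hx => le_of_eq ?_
        have ht : t = invWeight x.1 ^ (q + 2) * invWeight x.2 ^ (q + 2) := by
          rw [← mul_pow, ← map_mul, mem_splits.1 hx]
        rw [mul_pow, NNReal.sq_sqrt, ht, weightedSq, weightedSq]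
        ring

lemma weightedSqNorm_wick_le (F G : FreeMonoid ℕ → ℂ) (q : ℕ) :
    weightedSqNorm (q + 2) (wick F G) ≤
      (∑' α, (invWeight α : ℝ≥0∞) ^ 2) * (weightedSqNorm q F * weightedSqNorm (q + 2) G) := by
  set T := ∑' α, (invWeight α : ℝ≥0∞) ^ 2
  calc weightedSqNorm (q + 2) (wick F G)
      ≤ ∑' γ, T * ∑ x ∈ splits γ, (weightedSq q F x.1 : ℝ≥0∞) * weightedSq (q + 2) G x.2 := by
        refine ENNReal.tsum_le_tsum fun γ => ?_
        calc (weightedSq (q + 2) (wick F G) γ : ℝ≥0∞)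
            ≤ (∑ x ∈ splits γ, (invWeight x.1 : ℝ≥0∞) ^ 2) *
                ∑ x ∈ splits γ, (weightedSq q F x.1 : ℝ≥0∞) * weightedSq (q + 2) G x.2 := by
              exact_mod_cast weightedSq_wick_le F G q γ
          _ ≤ _ := by gcongr; exact sum_splits_le_tsum γ _
    _ = T * (weightedSqNorm q F * weightedSqNorm (q + 2) G) := by
        rw [ENNReal.tsum_mul_left, tsum_sum_splits (fun x => (weightedSq q F x.1 : ℝ≥0∞) * _),
          ENNReal.tsum_prod']
        simp_rw [ENNReal.tsum_mul_left, ENNReal.tsum_mul_right]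
        rfl

lemma weightedSqNorm_wickPow_le (F : FreeMonoid ℕ → ℂ) (q n : ℕ) :
    weightedSqNorm (q + 2) (wickPow F n) ≤
      ((∑' α, (invWeight α : ℝ≥0∞) ^ 2) * weightedSqNorm q F) ^ n := by
  induction n with
  | zero =>
    have hne : ∀ γ : FreeMonoid ℕ, γ ≠ 1 → FreeMonoid.toList γ ≠ [] :=
      fun γ => FreeMonoid.toList.injective.ne
    rw [pow_zero, weightedSqNorm,
      tsum_eq_single 1 fun γ hγ => by simp [weightedSq, wickPow, hne γ hγ]]
    simp [weightedSq, wickPow]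
  | succ n ih =>
    refine (weightedSqNorm_wick_le F _ q).trans ?_
    rw [pow_succ']
    grw [ih, ← mul_assoc]

lemma exists_sqrt_tsum_wickPow_le {p : ℕ} {F : FreeMonoid ℕ → ℂ}
    (hF : Summable fun γ => ‖F γ‖ ^ 2 * ncWeight γ ^ (-(p : ℤ))) {r : ℝ}
    (hr : ‖F 1‖ * √B₂sq < r) :
    ∃ q : ℕ, ∀ n, Summable (fun γ => ‖wickPow F n γ‖ ^ 2 * ncWeight γ ^ (-(q : ℤ))) ∧
      √(∑' γ, ‖wickPow F n γ‖ ^ 2 * ncWeight γ ^ (-(q : ℤ))) ≤ r ^ n := by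
  have hr0 : 0 < r := (by positivity : 0 ≤ ‖F 1‖ * √B₂sq).trans_lt hr
  have hc : ENNReal.ofReal B₂sq * (‖F 1‖₊ : ℝ≥0∞) ^ 2 < ENNReal.ofReal (r ^ 2) := by
    rw [← enorm_eq_nnnorm, ← ofReal_norm, ← ENNReal.ofReal_pow (norm_nonneg _),
      ← ENNReal.ofReal_mul B₂sq_pos.le, ENNReal.ofReal_lt_ofReal_iff (by positivity),
      ← Real.sq_sqrt B₂sq_pos.le, ← mul_pow, mul_comm]
    exact pow_lt_pow_left₀ hr (by positivity) two_ne_zero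
  have hT := ENNReal.Tendsto.const_mul
    (tendsto_weightedSqNorm ((summable_iff_weightedSqNorm_ne_top p F).1 hF))
    (Or.inr (ENNReal.ofReal_ne_top (r := B₂sq)))
  obtain ⟨q, hq⟩ := (hT.eventually (gt_mem_nhds hc)).exists
  refine ⟨q + 2, fun n => ?_⟩
  have hle : weightedSqNorm (q + 2) (wickPow F n) ≤ ENNReal.ofReal ((r ^ n) ^ 2) := by
    rw [← pow_mul, mul_comm, pow_mul, ENNReal.ofReal_pow (sq_nonneg r)]
    grw [weightedSqNorm_wickPow_le, tsum_invWeight_sq, hq.le]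
  refine ⟨(summable_iff_weightedSqNorm_ne_top _ _).2
    (ne_top_of_le_ne_top ENNReal.ofReal_ne_top hle), ?_⟩
  rw [tsum_eq_toReal_weightedSqNorm, ← Real.sqrt_sq (pow_nonneg hr0.le n)]
  exact Real.sqrt_le_sqrt (ENNReal.toReal_le_of_le_ofReal (by positivity) hle)

end Wick

open Wick in
/-- Let `φ(z) = ∑ φ_n z^n` converge absolutely on the open disk of radius `R`, and let
`f ∈ S̃₋₁` with `|E[f]| < R/B₂`, where `B₂ = (1 − 2^{-2} ζ(2))^{-1/2}`. Then
`φ(f) = ∑_n φ_n f^{⊗n}` converges (absolutely in norm, hence coefficientwise) in some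
`L²(ℓ̃, μ_{-p})`, so it defines an element of `S̃₋₁`. -/
theorem wick_power_series (φ : ℕ → ℂ) (R : ℝ)
    (hφ : ∀ r : ℝ, 0 ≤ r → r < R → Summable (fun n => ‖φ n‖ * r ^ n))
    (f : FreeMonoid ℕ → ℂ)
    (hf : ∃ p : ℕ, Summable (fun α => ‖f α‖ ^ 2 * ncWeight α ^ (-(p : ℤ))))
    (hE : ‖f 1‖ <
      R / Real.sqrt ((1 - (2 : ℝ) ^ (-2 : ℤ) * ∑' n : ℕ, ((n + 1 : ℝ)) ^ (-2 : ℤ))⁻¹)) :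
    ∃ p : ℕ,
      (∀ n, Summable (fun γ => ‖wickPow f n γ‖ ^ 2 * ncWeight γ ^ (-(p : ℤ)))) ∧
      Summable (fun n : ℕ => ‖φ n‖ *
        Real.sqrt (∑' γ, ‖wickPow f n γ‖ ^ 2 * ncWeight γ ^ (-(p : ℤ)))) ∧
      (∀ γ, Summable (fun n : ℕ => φ n * wickPow f n γ)) ∧
      Summable (fun γ : FreeMonoid ℕ =>
        ‖∑' n : ℕ, φ n * wickPow f n γ‖ ^ 2 * ncWeight γ ^ (-(p : ℤ))) := by
  obtain ⟨p, hp⟩ := hf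
  obtain ⟨r, hfr, hrR⟩ := exists_between ((lt_div_iff₀ (Real.sqrt_pos.2 B₂sq_pos)).1 hE)
  obtain ⟨q, hq⟩ := exists_sqrt_tsum_wickPow_le hp hfr
  have hr : 0 ≤ r := (by positivity : 0 ≤ ‖f 1‖ * √B₂sq).trans hfr.le
  have hnorm : Summable fun n => ‖φ n‖ * √(∑' γ, ‖wickPow f n γ‖ ^ 2 * ncWeight γ ^ (-(q : ℤ))) :=
    (hφ r hr hrR).of_nonneg_of_le (fun n => by positivity)
      fun n => mul_le_mul_of_nonneg_left (hq n).2 (norm_nonneg _)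
  have hscale : ∀ n, √(∑' γ, ‖φ n * wickPow f n γ‖ ^ 2 * ncWeight γ ^ (-(q : ℤ))) =
      ‖φ n‖ * √(∑' γ, ‖wickPow f n γ‖ ^ 2 * ncWeight γ ^ (-(q : ℤ))) := fun n => by
    simp_rw [norm_mul, mul_pow, mul_assoc, tsum_mul_left]
    rw [Real.sqrt_mul (sq_nonneg _), Real.sqrt_sq (norm_nonneg _)]
  obtain ⟨hpointwise, hL2⟩ := summable_sq_tsum_of_summable_sqrt
    (w := fun γ => ncWeight γ ^ (-(q : ℤ))) (a := fun n γ => φ n * wickPow f n γ)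
    (fun γ => zpow_pos (ncWeight_pos γ) _)
    (fun n => by simpa only [norm_mul, mul_pow, mul_assoc] using (hq n).1.mul_left (‖φ n‖ ^ 2))
    (by simpa only [hscale] using hnorm)
  exact ⟨q, fun n => (hq n).1, hnorm, hpointwise, hL2⟩
end

section
/- An element f ∈ S̃_{-1} is invertible with respect to the Wick product (there exists g ∈ S̃_{-1} with f ⊗ g = g ⊗ f = 1) if and only if E[f] ≠ 0. -/
/-- The unit for the Wick product: the indicator of the empty word. -/
noncomputable def wickUnit : FreeMonoid ℕ → ℂ :=
  fun γ => if FreeMonoid.toList γ = [] then 1 else 0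

/-- Membership in the non-commutative Kondratiev space
`S̃₋₁ = ⋃_p L²(ℓ̃, μ_{-p})`. -/
def memS (f : FreeMonoid ℕ → ℂ) : Prop :=
  ∃ p : ℕ, Summable (fun α => ‖f α‖ ^ 2 * ncWeight α ^ (-(p : ℤ)))

/-! If `f 1 ≠ 0`, write `f = f 1 • (1 - h)` with `h 1 = 0`. Then `h ^ n` vanishes on words of
length `< n`, so the Neumann series `∑ₙ h ^ n` is a finite sum at every word, and the geometric-sum
identities make it a two-sided inverse of `1 - h`. It lies in `S̃₋₁` by Våge's inequality
`‖x ⊗ y‖²_{p+1} ≤ 2 ‖x‖²_p ‖y‖²_{p+1}` (Cauchy–Schwarz with weights `2 ^ j`, absorbed by one power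
of the weight of the prefix of length `j`, which is `≥ 2 ^ j`), combined with `‖h‖_p → 0` as
`p → ∞`, since every nonempty word has weight `≥ 2`. For large `p` the norms of the powers `h ^ n`
then decay geometrically. Conversely `E[f ⊗ g] = E[f] E[g]`. -/

open Finset Filter Topology
open scoped ENNReal

lemma ncWeight_mul (a b : FreeMonoid ℕ) : ncWeight (a * b) = ncWeight a * ncWeight b := by
  simp [ncWeight, FreeMonoid.toList_mul]

lemma two_pow_length_le_ncWeight (a : FreeMonoid ℕ) : (2 : ℝ) ^ a.length ≤ ncWeight a := by
  induction a using FreeMonoid.inductionOn' with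
  | one => simp [ncWeight]
  | of_mul i a ih =>
    rw [ncWeight_mul, FreeMonoid.length_mul, FreeMonoid.length_of, add_comm, pow_succ']
    have : (2 : ℝ) ≤ ncWeight (FreeMonoid.of i) := by simp [ncWeight]
    gcongr

lemma ncWeight_pos (a : FreeMonoid ℕ) : 0 < ncWeight a :=
  (pow_pos two_pos _).trans_le (two_pow_length_le_ncWeight a)

lemma two_le_ncWeight {a : FreeMonoid ℕ} (ha : a ≠ 1) : 2 ≤ ncWeight a := by
  have : 1 ≤ a.length := Nat.one_le_iff_ne_zero.mpr (FreeMonoid.length_eq_zero.not.mpr ha)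
  calc (2 : ℝ) = 2 ^ 1 := (pow_one 2).symm
    _ ≤ 2 ^ a.length := pow_le_pow_right₀ one_le_two this
    _ ≤ ncWeight a := two_pow_length_le_ncWeight a

lemma FreeMonoid.tsum_sum_take_drop_le {α : Type*} (F : FreeMonoid α → FreeMonoid α → ℝ≥0∞) :
    ∑' γ : FreeMonoid α, ∑ j ∈ range (γ.toList.length + 1),
        F (.ofList (γ.toList.take j)) (.ofList (γ.toList.drop j)) ≤
      ∑' (a : FreeMonoid α) (b : FreeMonoid α), F a b := by
  let split : (Σ γ : FreeMonoid α, Fin (γ.toList.length + 1)) → FreeMonoid α × FreeMonoid α :=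
    fun σ => (.ofList (σ.1.toList.take σ.2), .ofList (σ.1.toList.drop σ.2))
  have split_injective : split.Injective := by
    rintro ⟨γ, j⟩ ⟨γ', j'⟩ hjj'
    simp only [split, Prod.mk.injEq] at hjj'
    obtain ⟨htake, hdrop⟩ := hjj'
    have hγ : γ = γ' := by
      rw [← FreeMonoid.ofList_toList γ, ← FreeMonoid.ofList_toList γ',
        ← List.take_append_drop j γ.toList, ← List.take_append_drop j' γ'.toList,
        FreeMonoid.ofList_append, FreeMonoid.ofList_append, htake, hdrop]
    subst hγ
    have := congrArg (fun a => a.toList.length) htake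
    simp only [FreeMonoid.toList_ofList, List.length_take] at this
    have hj : j = j' := Fin.ext (by omega)
    rw [hj]
  calc ∑' γ : FreeMonoid α, ∑ j ∈ range (γ.toList.length + 1),
        F (.ofList (γ.toList.take j)) (.ofList (γ.toList.drop j))
      = ∑' σ, F (split σ).1 (split σ).2 := by
        rw [ENNReal.tsum_sigma']
        refine tsum_congr fun γ => ?_
        rw [tsum_fintype, ← Fin.sum_univ_eq_sum_range]
    _ ≤ ∑' p : FreeMonoid α × FreeMonoid α, F p.1 p.2 :=
        ENNReal.tsum_comp_le_tsum_of_injective split_injective fun p => F p.1 p.2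
    _ = ∑' (a : FreeMonoid α) (b : FreeMonoid α), F a b := ENNReal.tsum_prod

lemma sq_sum_le_two_mul_sum_two_pow_mul_sq (a : ℕ → ℝ) (n : ℕ) :
    (∑ j ∈ range n, a j) ^ 2 ≤ 2 * ∑ j ∈ range n, 2 ^ j * a j ^ 2 := by
  calc (∑ j ∈ range n, a j) ^ 2
      ≤ (∑ j ∈ range n, (1 / 2 : ℝ) ^ j) * ∑ j ∈ range n, 2 ^ j * a j ^ 2 :=
        sum_sq_le_sum_mul_sum_of_sq_le_mul _ (fun _ _ => by positivity) (fun _ _ => by positivity)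
          fun j _ => by rw [← mul_assoc, ← mul_pow]; norm_num
    _ ≤ 2 * ∑ j ∈ range n, 2 ^ j * a j ^ 2 := by
        gcongr
        exact sum_geometric_two_le n

noncomputable section

/-- `FreeMonoid ℕ → ℂ` with the Wick product as multiplication, instead of the pointwise product
that `Pi` would provide. -/
def WickSeries : Type := FreeMonoid ℕ → ℂ

namespace WickSeries

instance : AddCommGroup WickSeries := Pi.addCommGroup

instance : Module ℂ WickSeries := Pi.module _ _ _

@[ext] lemma ext {x y : WickSeries} (h : ∀ γ, x γ = y γ) : x = y := funext h

@[simp] lemma add_apply (x y : WickSeries) (γ : FreeMonoid ℕ) : (x + y) γ = x γ + y γ := rfl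
@[simp] lemma sub_apply (x y : WickSeries) (γ : FreeMonoid ℕ) : (x - y) γ = x γ - y γ := rfl
@[simp] lemma zero_apply (γ : FreeMonoid ℕ) : (0 : WickSeries) γ = 0 := rfl
@[simp] lemma smul_apply (c : ℂ) (x : WickSeries) (γ : FreeMonoid ℕ) : (c • x) γ = c * x γ := rfl

lemma sum_apply {ι : Type*} (s : Finset ι) (x : ι → WickSeries) (γ : FreeMonoid ℕ) :
    (∑ i ∈ s, x i) γ = ∑ i ∈ s, x i γ :=
  Finset.sum_apply (M := fun _ => ℂ) γ s x

instance : Mul WickSeries := ⟨wick⟩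
instance : One WickSeries := ⟨wickUnit⟩

lemma mul_apply (x y : WickSeries) (γ : FreeMonoid ℕ) :
    (x * y) γ = ∑ j ∈ range (γ.toList.length + 1),
      x (.ofList (γ.toList.take j)) * y (.ofList (γ.toList.drop j)) := rfl

@[simp] lemma one_apply_one : (1 : WickSeries) 1 = 1 := show wickUnit 1 = 1 from if_pos rfl

lemma one_apply_of_ne_one {γ : FreeMonoid ℕ} (hγ : γ ≠ 1) : (1 : WickSeries) γ = 0 :=
  show wickUnit γ = 0 from
    if_neg fun h => hγ (FreeMonoid.length_eq_zero.mp (List.length_eq_zero_iff.mpr h))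

@[simp] lemma mul_apply_one (x y : WickSeries) : (x * y) 1 = x 1 * y 1 := by
  simp [mul_apply]

protected lemma one_mul (x : WickSeries) : 1 * x = x := by
  ext γ
  rw [mul_apply, sum_eq_single 0]
  · rw [List.take_zero, List.drop_zero, FreeMonoid.ofList_nil, one_apply_one, one_mul]
    rfl
  · intro j _ hj
    rw [one_apply_of_ne_one, zero_mul]
    rw [Ne, ← FreeMonoid.length_eq_zero]
    simp only [FreeMonoid.length, FreeMonoid.toList_ofList, List.length_take]
    simp only [mem_range] at *
    omega
  · simp

protected lemma mul_one (x : WickSeries) : x * 1 = x := by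
  ext γ
  rw [mul_apply, sum_eq_single γ.toList.length]
  · rw [List.take_of_length_le le_rfl, List.drop_of_length_le le_rfl, FreeMonoid.ofList_nil,
      one_apply_one, mul_one]
    rfl
  · intro j hj hj'
    rw [one_apply_of_ne_one, mul_zero]
    rw [Ne, ← FreeMonoid.length_eq_zero]
    simp only [FreeMonoid.length, FreeMonoid.toList_ofList, List.length_drop]
    simp only [mem_range] at *
    omega
  · simp

protected lemma mul_assoc (x y z : WickSeries) : x * y * z = x * (y * z) := by
  ext γ
  simp only [mul_apply, sum_mul, mul_sum, FreeMonoid.toList_ofList]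
  rw [sum_sigma', sum_sigma']
  refine sum_nbij' (fun p => ⟨p.2, p.1 - p.2⟩) (fun p => ⟨p.1 + p.2, p.1⟩) ?_ ?_ ?_ ?_ ?_
  all_goals rintro ⟨j, i⟩ hp
  all_goals simp only [mem_sigma, mem_range, List.length_take, List.length_drop] at hp ⊢
  · omega
  · omega
  · simp [show i + (j - i) = j by omega]
  · simp
  · rw [List.take_take, List.drop_take, List.drop_drop, min_eq_left (by omega),
      show i + (j - i) = j by omega, mul_assoc]

instance : Ring WickSeries where
  __ := (inferInstance : AddCommGroup WickSeries)
  mul_assoc := WickSeries.mul_assoc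
  one_mul := WickSeries.one_mul
  mul_one := WickSeries.mul_one
  left_distrib x y z := by ext γ; simp [mul_apply, mul_add, sum_add_distrib]
  right_distrib x y z := by ext γ; simp [mul_apply, add_mul, sum_add_distrib]
  zero_mul x := by ext γ; simp [mul_apply]
  mul_zero x := by ext γ; simp [mul_apply]

instance : Algebra ℂ WickSeries :=
  Algebra.ofModule (fun c x y => by ext γ; simp [mul_apply, mul_sum, mul_assoc])
    (fun c x y => by ext γ; simp [mul_apply, mul_sum, mul_left_comm])

lemma mul_apply_congr {x x' y y' : WickSeries} {γ : FreeMonoid ℕ}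
    (hx : ∀ α : FreeMonoid ℕ, α.length ≤ γ.length → x α = x' α)
    (hy : ∀ β : FreeMonoid ℕ, β.length ≤ γ.length → y β = y' β) :
    (x * y) γ = (x' * y') γ := by
  simp only [mul_apply]
  refine sum_congr rfl fun j _ => ?_
  rw [hx _ (by simp [FreeMonoid.length]), hy _ (by simp [FreeMonoid.length])]

def neumann (h : WickSeries) : WickSeries := fun γ => ∑ n ∈ range (γ.length + 1), (h ^ n) γ

variable {h : WickSeries}

lemma pow_apply_eq_zero_of_length_lt (hh : h 1 = 0) {n : ℕ} {γ : FreeMonoid ℕ}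
    (hγ : γ.length < n) : (h ^ n) γ = 0 := by
  induction n generalizing γ with
  | zero => omega
  | succ n ih =>
    rw [pow_succ', mul_apply]
    refine sum_eq_zero fun j hj => ?_
    rcases j.eq_zero_or_pos with rfl | hj0
    · rw [List.take_zero, FreeMonoid.ofList_nil, hh, zero_mul]
    · rw [ih, mul_zero]
      simp only [FreeMonoid.length, mem_range] at hγ hj ⊢
      simp only [FreeMonoid.toList_ofList, List.length_drop]
      omega

lemma neumann_apply_eq_sum_apply (hh : h 1 = 0) {N : ℕ} {γ : FreeMonoid ℕ} (hN : γ.length < N) :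
    neumann h γ = (∑ n ∈ range N, h ^ n) γ := by
  rw [sum_apply]
  refine sum_subset (fun n hn => ?_) fun n _ hn => pow_apply_eq_zero_of_length_lt hh ?_
  · simp only [mem_range] at hn ⊢; omega
  · simp only [mem_range] at hn; omega

lemma one_sub_mul_neumann (hh : h 1 = 0) : (1 - h) * neumann h = 1 := by
  ext γ
  calc ((1 - h) * neumann h) γ = ((1 - h) * ∑ n ∈ range (γ.length + 1), h ^ n) γ :=
        mul_apply_congr (fun _ _ => rfl) fun β hβ => neumann_apply_eq_sum_apply hh (by omega)
    _ = (1 : WickSeries) γ := by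
        rw [mul_neg_geom_sum, sub_apply, pow_apply_eq_zero_of_length_lt hh (by omega), sub_zero]

lemma neumann_mul_one_sub (hh : h 1 = 0) : neumann h * (1 - h) = 1 := by
  ext γ
  calc (neumann h * (1 - h)) γ = ((∑ n ∈ range (γ.length + 1), h ^ n) * (1 - h)) γ :=
        mul_apply_congr (fun α hα => neumann_apply_eq_sum_apply hh (by omega)) fun _ _ => rfl
    _ = (1 : WickSeries) γ := by
        rw [geom_sum_mul_neg, sub_apply, pow_apply_eq_zero_of_length_lt hh (by omega), sub_zero]

def weightedSq (q : ℕ) (x : WickSeries) (γ : FreeMonoid ℕ) : ℝ :=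
  ‖x γ‖ ^ 2 * ncWeight γ ^ (-(q : ℤ))

/-- The squared norm of `L²(ℓ̃, μ_{-q})`, valued in `ℝ≥0∞` so that it is defined for every `x`. -/
def kNormSq (q : ℕ) (x : WickSeries) : ℝ≥0∞ :=
  ∑' γ, ENNReal.ofReal (weightedSq q x γ)

lemma weightedSq_nonneg (q : ℕ) (x : WickSeries) (γ : FreeMonoid ℕ) : 0 ≤ weightedSq q x γ := by
  have := ncWeight_pos γ
  unfold weightedSq
  positivity

lemma memS_iff_exists_kNormSq_ne_top {x : WickSeries} : memS x ↔ ∃ q, kNormSq q x ≠ ⊤ := by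
  refine exists_congr fun q => ⟨Summable.tsum_ofReal_ne_top, fun hq => ?_⟩
  exact (ENNReal.summable_toReal hq).congr fun γ => ENNReal.toReal_ofReal (weightedSq_nonneg q x γ)

lemma weightedSq_smul (q : ℕ) (c : ℂ) (x : WickSeries) (γ : FreeMonoid ℕ) :
    weightedSq q (c • x) γ = ‖c‖ ^ 2 * weightedSq q x γ := by
  simp [weightedSq, mul_pow, mul_assoc]

lemma memS_smul (c : ℂ) {x : WickSeries} (hx : memS x) : memS (c • x) := by
  obtain ⟨q, hq⟩ := hx
  exact ⟨q, (hq.mul_left (‖c‖ ^ 2)).congr fun γ => (weightedSq_smul q c x γ).symm⟩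

@[simp] lemma kNormSq_one (q : ℕ) : kNormSq q 1 = 1 := by
  rw [kNormSq, tsum_eq_single 1 fun γ hγ => by simp [weightedSq, one_apply_of_ne_one hγ]]
  simp [weightedSq, ncWeight]

lemma two_pow_length_mul_weightedSq_succ_le (p : ℕ) (x : WickSeries) (α : FreeMonoid ℕ) :
    2 ^ α.length * weightedSq (p + 1) x α ≤ weightedSq p x α := by
  have hw := ncWeight_pos α
  have h2 := two_pow_length_le_ncWeight α
  have : weightedSq (p + 1) x α = weightedSq p x α / ncWeight α := by
    rw [weightedSq, weightedSq, div_eq_mul_inv, mul_assoc, ← zpow_neg_one, ← zpow_add₀ hw.ne']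
    push_cast; ring_nf
  rw [this, mul_div_assoc', div_le_iff₀ hw, mul_comm]
  exact mul_le_mul_of_nonneg_left h2 (weightedSq_nonneg p x α)

lemma weightedSq_mul_le (p : ℕ) (x y : WickSeries) (γ : FreeMonoid ℕ) :
    weightedSq (p + 1) (x * y) γ ≤ 2 * ∑ j ∈ range (γ.toList.length + 1),
      weightedSq p x (.ofList (γ.toList.take j)) *
        weightedSq (p + 1) y (.ofList (γ.toList.drop j)) := by
  set l := γ.toList
  set a : ℕ → FreeMonoid ℕ := fun j => .ofList (l.take j)
  set b : ℕ → FreeMonoid ℕ := fun j => .ofList (l.drop j)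
  have hab : ∀ j, ncWeight γ = ncWeight (a j) * ncWeight (b j) := fun j => by
    rw [← ncWeight_mul, ← FreeMonoid.ofList_append, List.take_append_drop]; rfl
  have hnorm : ‖(x * y) γ‖ ≤ ∑ j ∈ range (l.length + 1), ‖x (a j)‖ * ‖y (b j)‖ := by
    rw [mul_apply]
    exact (norm_sum_le _ _).trans_eq (sum_congr rfl fun j _ => norm_mul _ _)
  have hw : 0 ≤ ncWeight γ ^ (-((p + 1 : ℕ) : ℤ)) := (zpow_pos (ncWeight_pos γ) _).le
  calc weightedSq (p + 1) (x * y) γ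
      ≤ (∑ j ∈ range (l.length + 1), ‖x (a j)‖ * ‖y (b j)‖) ^ 2 *
          ncWeight γ ^ (-((p + 1 : ℕ) : ℤ)) := by
        unfold weightedSq; gcongr
    _ ≤ (2 * ∑ j ∈ range (l.length + 1), 2 ^ j * (‖x (a j)‖ * ‖y (b j)‖) ^ 2) *
          ncWeight γ ^ (-((p + 1 : ℕ) : ℤ)) := by
        gcongr; exact sq_sum_le_two_mul_sum_two_pow_mul_sq _ _
    _ = 2 * ∑ j ∈ range (l.length + 1),
          2 ^ j * weightedSq (p + 1) x (a j) * weightedSq (p + 1) y (b j) := by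
        rw [mul_assoc, sum_mul]
        congr 1
        refine sum_congr rfl fun j _ => ?_
        rw [hab j, mul_zpow]
        unfold weightedSq; ring
    _ ≤ 2 * ∑ j ∈ range (l.length + 1), weightedSq p x (a j) * weightedSq (p + 1) y (b j) := by
        gcongr with j hj
        · exact weightedSq_nonneg _ _ _
        · have hlen : (a j).length = j := by
            simp only [a, FreeMonoid.length, FreeMonoid.toList_ofList, List.length_take]
            simp only [mem_range] at hj; omega
          simpa only [hlen] using two_pow_length_mul_weightedSq_succ_le p x (a j)

lemma kNormSq_mul_le (p : ℕ) (x y : WickSeries) :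
    kNormSq (p + 1) (x * y) ≤ 2 * kNormSq p x * kNormSq (p + 1) y := by
  calc kNormSq (p + 1) (x * y)
      ≤ ∑' γ : FreeMonoid ℕ, 2 * ∑ j ∈ range (γ.toList.length + 1),
          ENNReal.ofReal (weightedSq p x (.ofList (γ.toList.take j))) *
            ENNReal.ofReal (weightedSq (p + 1) y (.ofList (γ.toList.drop j))) := by
        refine ENNReal.tsum_le_tsum fun γ => (ENNReal.ofReal_le_ofReal
          (weightedSq_mul_le p x y γ)).trans_eq ?_
        rw [ENNReal.ofReal_mul zero_le_two, ENNReal.ofReal_sum_of_nonneg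
          fun j _ => mul_nonneg (weightedSq_nonneg _ _ _) (weightedSq_nonneg _ _ _)]
        simp only [ENNReal.ofReal_ofNat, ENNReal.ofReal_mul (weightedSq_nonneg _ _ _)]
    _ ≤ 2 * ∑' (α : FreeMonoid ℕ) (β : FreeMonoid ℕ),
          ENNReal.ofReal (weightedSq p x α) * ENNReal.ofReal (weightedSq (p + 1) y β) := by
        rw [ENNReal.tsum_mul_left]
        exact mul_le_mul_right (FreeMonoid.tsum_sum_take_drop_le _) 2
    _ = 2 * kNormSq p x * kNormSq (p + 1) y := by
        simp only [kNormSq, ENNReal.tsum_mul_left, ENNReal.tsum_mul_right, mul_assoc]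

lemma kNormSq_add_le_inv_two_pow_mul (hh : h 1 = 0) (p k : ℕ) :
    kNormSq (p + k) h ≤ 2⁻¹ ^ k * kNormSq p h := by
  rw [kNormSq, kNormSq, ← ENNReal.tsum_mul_left]
  refine ENNReal.tsum_le_tsum fun γ => ?_
  rw [← ENNReal.ofReal_ofNat 2, ← ENNReal.ofReal_inv_of_pos two_pos, ← ENNReal.ofReal_pow
    (by norm_num), ← ENNReal.ofReal_mul (by positivity)]
  refine ENNReal.ofReal_le_ofReal ?_
  obtain rfl | hγ := eq_or_ne γ 1
  · simp [weightedSq, hh]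
  have hw := two_le_ncWeight hγ
  have hsplit :
      ncWeight γ ^ (-((p + k : ℕ) : ℤ)) = (ncWeight γ ^ k)⁻¹ * ncWeight γ ^ (-(p : ℤ)) := by
    rw [← zpow_natCast, ← zpow_neg, ← zpow_add₀ (by positivity)]
    push_cast; ring_nf
  calc weightedSq (p + k) h γ = (ncWeight γ ^ k)⁻¹ * weightedSq p h γ := by
        rw [weightedSq, weightedSq, hsplit]; ring
    _ ≤ 2⁻¹ ^ k * weightedSq p h γ := by
        gcongr
        · exact weightedSq_nonneg _ _ _
        · rw [inv_pow]; gcongr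

lemma exists_kNormSq_lt (hh : h 1 = 0) (hmem : memS h) {ε : ℝ≥0∞} (hε : 0 < ε) :
    ∃ p, kNormSq p h < ε := by
  obtain ⟨p₀, hp₀⟩ := memS_iff_exists_kNormSq_ne_top.mp hmem
  have hlim : Tendsto (fun k : ℕ => 2⁻¹ ^ k * kNormSq p₀ h) atTop (𝓝 0) := by
    simpa using ENNReal.Tendsto.mul_const
      (ENNReal.tendsto_pow_atTop_nhds_zero_of_lt_one (by norm_num)) (Or.inr hp₀)
  obtain ⟨k, hk⟩ := (hlim.eventually (Iio_mem_nhds hε)).exists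
  exact ⟨p₀ + k, (kNormSq_add_le_inv_two_pow_mul hh p₀ k).trans_lt hk⟩

lemma kNormSq_pow_le (p n : ℕ) : kNormSq (p + 1) (h ^ n) ≤ (2 * kNormSq p h) ^ n := by
  induction n with
  | zero => simp
  | succ n ih =>
    calc kNormSq (p + 1) (h ^ (n + 1)) ≤ 2 * kNormSq p h * kNormSq (p + 1) (h ^ n) := by
          rw [pow_succ']; exact kNormSq_mul_le p h (h ^ n)
      _ ≤ 2 * kNormSq p h * (2 * kNormSq p h) ^ n := by gcongr
      _ = (2 * kNormSq p h) ^ (n + 1) := (pow_succ' _ _).symm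

lemma weightedSq_neumann_le (q : ℕ) (γ : FreeMonoid ℕ) :
    weightedSq q (neumann h) γ ≤
      2 * ∑ n ∈ range (γ.length + 1), 2 ^ n * weightedSq q (h ^ n) γ := by
  have hw : 0 ≤ ncWeight γ ^ (-(q : ℤ)) := (zpow_pos (ncWeight_pos γ) _).le
  calc weightedSq q (neumann h) γ
      ≤ (∑ n ∈ range (γ.length + 1), ‖(h ^ n) γ‖) ^ 2 * ncWeight γ ^ (-(q : ℤ)) := by
        unfold weightedSq neumann; gcongr; exact norm_sum_le _ _
    _ ≤ (2 * ∑ n ∈ range (γ.length + 1), 2 ^ n * ‖(h ^ n) γ‖ ^ 2) * ncWeight γ ^ (-(q : ℤ)) := by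
        gcongr; exact sq_sum_le_two_mul_sum_two_pow_mul_sq _ _
    _ = 2 * ∑ n ∈ range (γ.length + 1), 2 ^ n * weightedSq q (h ^ n) γ := by
        simp only [weightedSq, mul_assoc, sum_mul]

lemma kNormSq_neumann_le (q : ℕ) :
    kNormSq q (neumann h) ≤ 2 * ∑' n, 2 ^ n * kNormSq q (h ^ n) := by
  calc kNormSq q (neumann h)
      ≤ ∑' γ, 2 * ∑ n ∈ range (γ.length + 1), 2 ^ n * ENNReal.ofReal (weightedSq q (h ^ n) γ) := by
        refine ENNReal.tsum_le_tsum fun γ => (ENNReal.ofReal_le_ofReal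
          (weightedSq_neumann_le q γ)).trans_eq ?_
        rw [ENNReal.ofReal_mul zero_le_two, ENNReal.ofReal_sum_of_nonneg
          fun n _ => mul_nonneg (by positivity) (weightedSq_nonneg _ _ _)]
        simp only [ENNReal.ofReal_ofNat, ENNReal.ofReal_mul (pow_nonneg zero_le_two _),
          ENNReal.ofReal_pow zero_le_two]
    _ ≤ ∑' γ, 2 * ∑' n, 2 ^ n * ENNReal.ofReal (weightedSq q (h ^ n) γ) :=
        ENNReal.tsum_le_tsum fun γ => mul_le_mul_right (ENNReal.sum_le_tsum _) 2
    _ = 2 * ∑' n, 2 ^ n * kNormSq q (h ^ n) := by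
        rw [ENNReal.tsum_mul_left, ENNReal.tsum_comm]
        simp only [kNormSq, ENNReal.tsum_mul_left]

lemma memS_neumann (hh : h 1 = 0) (hmem : memS h) : memS (neumann h) := by
  obtain ⟨p, hp⟩ := exists_kNormSq_lt hh hmem (ε := 4⁻¹) (by norm_num)
  have hr : 4 * kNormSq p h < 1 :=
    (ENNReal.mul_lt_mul_right (by norm_num) (by norm_num) hp).trans_eq
      (ENNReal.mul_inv_cancel (by norm_num) (by norm_num))
  have hgeom : ∀ n, 2 ^ n * kNormSq (p + 1) (h ^ n) ≤ (4 * kNormSq p h) ^ n := fun n =>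
    calc 2 ^ n * kNormSq (p + 1) (h ^ n) ≤ 2 ^ n * (2 * kNormSq p h) ^ n := by
          gcongr; exact kNormSq_pow_le p n
      _ = (4 * kNormSq p h) ^ n := by rw [← mul_pow, ← mul_assoc]; norm_num
  refine memS_iff_exists_kNormSq_ne_top.mpr ⟨p + 1, ne_top_of_le_ne_top ?_
    ((kNormSq_neumann_le _).trans (mul_le_mul_right (ENNReal.tsum_le_tsum hgeom) 2))⟩
  rw [ENNReal.tsum_geometric]
  exact ENNReal.mul_ne_top (by norm_num) (ENNReal.inv_ne_top.mpr (tsub_pos_of_lt hr).ne')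

lemma memS_one_sub_smul {f : WickSeries} {c : ℂ} (hf : memS f) (hc : c * f 1 = 1) :
    memS (1 - c • f : WickSeries) := by
  obtain ⟨q, hq⟩ := memS_smul c hf
  refine ⟨q, hq.of_nonneg_of_le (weightedSq_nonneg q _) fun γ => ?_⟩
  have hnorm : ‖(1 - c • f : WickSeries) γ‖ ≤ ‖(c • f) γ‖ := by
    obtain rfl | hγ := eq_or_ne γ 1
    · simp [hc]
    · rw [sub_apply, one_apply_of_ne_one hγ, zero_sub, norm_neg]
  have hw := ncWeight_pos γ
  gcongr

theorem exists_mul_eq_one_of_apply_one_ne_zero {f : WickSeries} (hf : memS f) (hf0 : f 1 ≠ 0) :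
    ∃ g : WickSeries, memS g ∧ f * g = 1 ∧ g * f = 1 := by
  set h := 1 - (f 1)⁻¹ • f
  have hh : h 1 = 0 := by simp [h, hf0]
  have hf_eq : f = f 1 • (1 - h) := by simp [h, smul_smul, hf0]
  have hmem : memS h := memS_one_sub_smul hf (inv_mul_cancel₀ hf0)
  refine ⟨(f 1)⁻¹ • neumann h, memS_smul _ (memS_neumann hh hmem), ?_, ?_⟩
  · nth_rw 1 [hf_eq]
    rw [smul_mul_smul_comm, one_sub_mul_neumann hh, mul_inv_cancel₀ hf0, one_smul]
  · nth_rw 2 [hf_eq]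
    rw [smul_mul_smul_comm, neumann_mul_one_sub hh, inv_mul_cancel₀ hf0, one_smul]

end WickSeries

end

/-- An element `f ∈ S̃₋₁` is invertible with respect to the Wick product iff its
generalized expectation `E[f] = f_1` (coefficient at the empty word) is nonzero. -/
theorem wick_invertible_iff (f : FreeMonoid ℕ → ℂ) (hf : memS f) :
    (∃ g : FreeMonoid ℕ → ℂ, memS g ∧ wick f g = wickUnit ∧ wick g f = wickUnit) ↔
      f 1 ≠ 0 := by
  constructor
  · rintro ⟨g, -, hfg, -⟩
    have hfg1 : f 1 * g 1 = 1 :=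
      (WickSeries.mul_apply_one f g).symm.trans ((congr_fun hfg 1).trans WickSeries.one_apply_one)
    exact left_ne_zero_of_mul_eq_one hfg1
  · exact WickSeries.exists_mul_eq_one_of_apply_one_ne_zero hf
end
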